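/- arXiv:math/0512485 — 2 statements merged into one kernel-verified Lean document; each statement's English description precedes it below -/
import Mathlib

section
/- The corner group R_c has order 88179840 = 8! · 3^7. -/
open Equiv

set_option maxRecDepth 100000

def Umove : Perm (Fin 48) :=
  c[0, 1, 3, 7] * c[5, 10, 16, 21] * c[24, 25, 28, 35] * c[26, 30, 37, 44] * c[32, 39, 45, 43]

def Lmove : Perm (Fin 48) :=
  c[5, 11, 19, 2] * c[7, 14, 13, 18] * c[30, 39, 46, 27] * c[24, 26, 31, 41] * c[35, 34, 40, 45]

def Fmove : Perm (Fin 48) :=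
  c[21, 17, 22, 14] * c[3, 8, 15, 11] * c[26, 32, 42, 34] * c[28, 36, 31, 39] * c[35, 44, 38, 46]

def Rmove : Perm (Fin 48) :=
  c[16, 12, 20, 8] * c[1, 4, 9, 17] * c[44, 43, 47, 36] * c[25, 29, 38, 32] * c[28, 37, 33, 42]

def Bmove : Perm (Fin 48) :=
  c[10, 18, 23, 4] * c[0, 2, 6, 12] * c[37, 45, 41, 29] * c[24, 27, 33, 43] * c[25, 30, 40, 47]

def Dmove : Perm (Fin 48) :=
  c[15, 9, 6, 13] * c[22, 20, 23, 19] * c[31, 38, 33, 40] * c[34, 36, 29, 27] * c[42, 47, 41, 46]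

def uCorner : Perm {x : Fin 48 // 24 ≤ (x : ℕ)} := Umove.subtypePerm (by decide)
def lCorner : Perm {x : Fin 48 // 24 ≤ (x : ℕ)} := Lmove.subtypePerm (by decide)
def fCorner : Perm {x : Fin 48 // 24 ≤ (x : ℕ)} := Fmove.subtypePerm (by decide)
def rCorner : Perm {x : Fin 48 // 24 ≤ (x : ℕ)} := Rmove.subtypePerm (by decide)
def bCorner : Perm {x : Fin 48 // 24 ≤ (x : ℕ)} := Bmove.subtypePerm (by decide)
def dCorner : Perm {x : Fin 48 // 24 ≤ (x : ℕ)} := Dmove.subtypePerm (by decide)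

/-- The corner group `R_c`, generated by the restrictions of the six face moves
to the corner facelets. -/
def cornerGroup : Subgroup (Perm {x : Fin 48 // 24 ≤ (x : ℕ)}) :=
  Subgroup.closure {uCorner, lCorner, fCorner, rCorner, bCorner, dCorner}


/-! Label each corner facelet by its corner `i : Fin 8` and an orientation `a : ZMod 3`, so that
every face move commutes with the twist `(i, a) ↦ (i, a + 1)`. A permutation commuting with the
twist permutes the corners and adds an orientation vector in `(ZMod 3)^8`; the sum of that vector
is a homomorphism, and it vanishes on the face moves. Hence the order of the corner group is the
order of its image in `S₈` times the number of sum-zero orientation vectors it realizes, at most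
`8! · 3^7`. Equality holds because two words realize an 8-cycle and an adjacent transposition of
the corners, and one word twists two corners in opposite directions; conjugating it by corner
permutations yields all sum-zero orientation vectors. -/

lemma card_subtype_sum_eq_zero {ι A : Type*} [Fintype ι] [Nonempty ι] [AddCommGroup A]
    [Finite A] : Nat.card {t : ι → A // ∑ i, t i = 0} = Nat.card A ^ (Fintype.card ι - 1) := by
  classical
  let s : (ι → A) →+ A := ∑ i, Pi.evalAddMonoidHom (fun _ => A) i
  have hs : Function.Surjective s := fun a =>
    ⟨Pi.single (Classical.arbitrary ι) a, by simp [s]⟩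
  have hpow : Nat.card A ^ Fintype.card ι = Nat.card A * Nat.card A ^ (Fintype.card ι - 1) := by
    rw [← pow_succ', Nat.sub_add_cancel Fintype.card_pos]
  have hcard := AddSubgroup.card_eq_card_quotient_mul_card_addSubgroup s.ker
  rw [Nat.card_congr (QuotientAddGroup.quotientKerEquivOfSurjective s hs).toEquiv, Nat.card_fun,
    Nat.card_eq_fintype_card (α := ι), hpow] at hcard
  rw [Nat.eq_of_mul_eq_mul_left Nat.card_pos hcard]
  exact Nat.card_congr (Equiv.subtypeEquivRight fun t => by simp [s])

namespace Cubies

variable {ι : Type*} {n : ℕ}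

def twistBy (t : ι → ZMod n) : Perm (ι × ZMod n) :=
  Equiv.prodCongrRight fun i => Equiv.addRight (t i)

@[simp]
lemma twistBy_apply (t : ι → ZMod n) (p : ι × ZMod n) : twistBy t p = (p.1, p.2 + t p.1) := rfl

lemma twistBy_zero : twistBy (0 : ι → ZMod n) = 1 := by
  ext p <;> simp

lemma twistBy_add (s t : ι → ZMod n) : twistBy (s + t) = twistBy s * twistBy t := by
  ext p <;> simp [add_left_comm, add_comm]

lemma twistBy_one_zpow (k : ℤ) : twistBy (1 : ι → ZMod n) ^ k = twistBy (k : ι → ZMod n) := by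
  induction k using Int.induction_on with
  | zero => rw [zpow_zero, Int.cast_zero, twistBy_zero]
  | succ k ih => rw [zpow_add_one, ih, ← twistBy_add, Int.cast_add, Int.cast_one]
  | pred k ih =>
    rw [zpow_sub_one, ih, mul_inv_eq_iff_eq_mul, ← twistBy_add, Int.cast_sub, Int.cast_one,
      sub_add_cancel]

variable (ι n) in
def twistCentralizer : Subgroup (Perm (ι × ZMod n)) :=
  Subgroup.centralizer {twistBy 1}

lemma twistBy_mem_twistCentralizer (t : ι → ZMod n) : twistBy t ∈ twistCentralizer ι n := by
  rw [twistCentralizer, Subgroup.mem_centralizer_singleton_iff, ← twistBy_add, ← twistBy_add,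
    add_comm]

def twistHom : Multiplicative (ι → ZMod n) →* twistCentralizer ι n where
  toFun t := ⟨twistBy t.toAdd, twistBy_mem_twistCentralizer _⟩
  map_one' := Subtype.ext twistBy_zero
  map_mul' _ _ := Subtype.ext (twistBy_add _ _)

def cubie (σ : Perm (ι × ZMod n)) (i : ι) : ι := (σ (i, 0)).1

def orientation (σ : Perm (ι × ZMod n)) (i : ι) : ZMod n := (σ (i, 0)).2

variable {σ : Perm (ι × ZMod n)}

lemma apply_eq_of_mem_twistCentralizer (hσ : σ ∈ twistCentralizer ι n) (p : ι × ZMod n) :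
    σ p = (cubie σ p.1, orientation σ p.1 + p.2) := by
  set k : ℤ := p.2.cast
  have hcomm : Commute σ (twistBy 1 ^ k) :=
    Commute.zpow_right (Subgroup.mem_centralizer_singleton_iff.mp hσ) k
  have hk (q : ι × ZMod n) : (twistBy 1 ^ k) q = (q.1, q.2 + p.2) := by
    rw [twistBy_one_zpow, twistBy_apply, Pi.intCast_apply, ZMod.intCast_zmod_cast]
  calc σ p = σ ((twistBy 1 ^ k) (p.1, 0)) := by rw [hk, zero_add]
    _ = (twistBy 1 ^ k) (σ (p.1, 0)) := DFunLike.congr_fun hcomm.eq (p.1, 0)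
    _ = (cubie σ p.1, orientation σ p.1 + p.2) := hk _

lemma cubie_mul (hσ : σ ∈ twistCentralizer ι n) (τ : Perm (ι × ZMod n)) :
    cubie (σ * τ) = cubie σ ∘ cubie τ := by
  ext i
  simp only [cubie, Perm.mul_apply, apply_eq_of_mem_twistCentralizer hσ (τ (i, 0)),
    Function.comp_apply]

lemma orientation_mul (hσ : σ ∈ twistCentralizer ι n) (τ : Perm (ι × ZMod n)) (i : ι) :
    orientation (σ * τ) i = orientation σ (cubie τ i) + orientation τ i := by
  simp only [orientation, Perm.mul_apply, apply_eq_of_mem_twistCentralizer hσ (τ (i, 0)), cubie]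

def cubieEnd : twistCentralizer ι n →* Function.End ι where
  toFun σ := cubie (σ : Perm (ι × ZMod n))
  map_one' := rfl
  map_mul' σ τ := cubie_mul σ.2 τ

def cubiePerm : twistCentralizer ι n →* Perm ι :=
  Perm.equivUnitsEnd.symm.toMonoidHom.comp cubieEnd.toHomUnits

lemma cubiePerm_apply (σ : twistCentralizer ι n) (i : ι) :
    cubiePerm σ i = cubie (σ : Perm (ι × ZMod n)) i := rfl

lemma inv_mul_twistHom_mul (σ : twistCentralizer ι n) (t : ι → ZMod n) :
    σ⁻¹ * twistHom (.ofAdd t) * σ = twistHom (.ofAdd (t ∘ cubiePerm σ)) := by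
  rw [mul_assoc, inv_mul_eq_iff_eq_mul]
  ext1; ext1 p
  simp [twistHom, cubiePerm_apply, apply_eq_of_mem_twistCentralizer σ.2, add_assoc]

lemma eq_twistHom_of_cubiePerm_eq_one {σ : twistCentralizer ι n} (hσ : cubiePerm σ = 1) :
    σ = twistHom (.ofAdd (orientation σ)) := by
  have hcubie (i : ι) : cubie (σ : Perm (ι × ZMod n)) i = i := DFunLike.congr_fun hσ i
  ext1; ext1 p
  simp [apply_eq_of_mem_twistCentralizer σ.2, twistHom, hcubie, add_comm]

variable [Fintype ι]

def totalTwist : twistCentralizer ι n →* Multiplicative (ZMod n) where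
  toFun σ := .ofAdd (∑ i, orientation (σ : Perm (ι × ZMod n)) i)
  map_one' := by simp [orientation]
  map_mul' σ τ := by
    rw [← ofAdd_add, Subgroup.coe_mul]
    simp only [orientation_mul σ.2, Finset.sum_add_distrib]
    rw [← Equiv.sum_comp (cubiePerm τ) (orientation (σ : Perm (ι × ZMod n)))]
    rfl

def kerCubiePermEquiv {G : Subgroup (twistCentralizer ι n)} (hG : G ≤ totalTwist.ker)
    (htwist : ∀ t : ι → ZMod n, ∑ i, t i = 0 → twistHom (.ofAdd t) ∈ G) :
    (cubiePerm.comp G.subtype).ker ≃ {t : ι → ZMod n // ∑ i, t i = 0} where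
  toFun σ := ⟨orientation ((σ : G) : Perm (ι × ZMod n)), ofAdd_eq_one.mp (hG σ.1.2)⟩
  invFun t := ⟨⟨twistHom (.ofAdd t), htwist t t.2⟩, Equiv.ext fun _ => rfl⟩
  left_inv σ := Subtype.ext <| Subtype.ext (eq_twistHom_of_cubiePerm_eq_one σ.2).symm
  right_inv _ := Subtype.ext <| funext fun _ => zero_add _

variable [DecidableEq ι]

lemma twistHom_mem_of_sum_eq_zero {G : Subgroup (twistCentralizer ι n)}
    (hG : G.map cubiePerm = ⊤) {i₀ j₀ : ι} (hij : i₀ ≠ j₀)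
    (h₀ : twistHom (.ofAdd (Pi.single i₀ 1 - Pi.single j₀ 1)) ∈ G)
    {t : ι → ZMod n} (ht : ∑ i, t i = 0) : twistHom (.ofAdd t) ∈ G := by
  have hpair (i : ι) : twistHom (.ofAdd (Pi.single i 1 - Pi.single j₀ 1)) ∈ G := by
    obtain rfl | hi := eq_or_ne i j₀
    · simp [G.one_mem]
    obtain ⟨σ, hσG, hσ⟩ : swap i i₀ ∈ G.map cubiePerm := hG ▸ Subgroup.mem_top _
    have hconj : (Pi.single i₀ 1 - Pi.single j₀ 1 : ι → ZMod n) ∘ cubiePerm σ =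
        Pi.single i 1 - Pi.single j₀ 1 := by
      ext k
      simp [hσ, Pi.single_apply, swap_apply_eq_iff, swap_apply_of_ne_of_ne hi.symm hij.symm]
    rw [← hconj, ← inv_mul_twistHom_mul]
    exact G.mul_mem (G.mul_mem (G.inv_mem hσG) h₀) hσG
  have hdecomp : t = ∑ i, t i • (Pi.single i 1 - Pi.single j₀ 1 : ι → ZMod n) := by
    simp only [smul_sub, Finset.sum_sub_distrib, ← Finset.sum_smul, ht, zero_smul, sub_zero]
    ext k
    simp [Finset.sum_apply, Pi.single_apply]
  change Multiplicative.ofAdd t ∈ G.comap twistHom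
  rw [hdecomp, ofAdd_sum]
  refine Subgroup.prod_mem _ fun i _ => ?_
  rw [← ZMod.intCast_zmod_cast (t i), Int.cast_smul_eq_zsmul, ofAdd_zsmul]
  exact zpow_mem (Subgroup.mem_comap.mpr (hpair i)) _

theorem card_eq_of_le_ker_totalTwist [NeZero n] {G : Subgroup (twistCentralizer ι n)}
    (hG : G ≤ totalTwist.ker) (hsurj : G.map cubiePerm = ⊤) {i₀ j₀ : ι} (hij : i₀ ≠ j₀)
    (h₀ : twistHom (.ofAdd (Pi.single i₀ 1 - Pi.single j₀ 1)) ∈ G) :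
    Nat.card G = (Fintype.card ι).factorial * n ^ (Fintype.card ι - 1) := by
  have : Nonempty ι := ⟨i₀⟩
  have hπ : Function.Surjective (cubiePerm.comp G.subtype) := by
    rwa [← MonoidHom.range_eq_top, MonoidHom.range_comp, Subgroup.range_subtype]
  have hker := kerCubiePermEquiv hG fun _ => twistHom_mem_of_sum_eq_zero hsurj hij h₀
  rw [Subgroup.card_eq_card_quotient_mul_card_subgroup (cubiePerm.comp G.subtype).ker,
    Nat.card_congr (QuotientGroup.quotientKerEquivOfSurjective _ hπ).toEquiv,
    Nat.card_congr hker, Nat.card_perm, Nat.card_eq_fintype_card, card_subtype_sum_eq_zero,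
    Nat.card_zmod]

end Cubies

open Cubies

/- Corner `i` carries the facelets `cornerFacelet i 0, 1, 2`, listed in the cyclic order that
every face move preserves, so that the moves commute with the twist `twistBy 1`. -/
def cornerFacelet : Fin 8 → ZMod 3 → Fin 48 :=
  ![![24, 30, 45], ![25, 37, 43], ![26, 39, 35], ![27, 40, 41],
    ![28, 44, 32], ![29, 33, 47], ![31, 46, 34], ![36, 38, 42]]

def toCornerFacelet (p : Fin 8 × ZMod 3) : {x : Fin 48 // 24 ≤ (x : ℕ)} :=
  ⟨cornerFacelet p.1 p.2, by revert p; decide⟩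

lemma toCornerFacelet_bijective : Function.Bijective toCornerFacelet := by decide

def cornerFaceletEquiv : Fin 8 × ZMod 3 ≃ {x : Fin 48 // 24 ≤ (x : ℕ)} where
  toFun := toCornerFacelet
  invFun := Fintype.bijInv toCornerFacelet_bijective
  left_inv := Fintype.leftInverse_bijInv _
  right_inv := Fintype.rightInverse_bijInv _

def relabelCorners : Perm {x : Fin 48 // 24 ≤ (x : ℕ)} ≃* Perm (Fin 8 × ZMod 3) :=
  cornerFaceletEquiv.symm.permCongrHom

def moveU : twistCentralizer (Fin 8) 3 :=
  ⟨relabelCorners uCorner, Subgroup.mem_centralizer_singleton_iff.mpr (by decide)⟩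
def moveL : twistCentralizer (Fin 8) 3 :=
  ⟨relabelCorners lCorner, Subgroup.mem_centralizer_singleton_iff.mpr (by decide)⟩
def moveF : twistCentralizer (Fin 8) 3 :=
  ⟨relabelCorners fCorner, Subgroup.mem_centralizer_singleton_iff.mpr (by decide)⟩
def moveR : twistCentralizer (Fin 8) 3 :=
  ⟨relabelCorners rCorner, Subgroup.mem_centralizer_singleton_iff.mpr (by decide)⟩
def moveB : twistCentralizer (Fin 8) 3 :=
  ⟨relabelCorners bCorner, Subgroup.mem_centralizer_singleton_iff.mpr (by decide)⟩
def moveD : twistCentralizer (Fin 8) 3 :=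
  ⟨relabelCorners dCorner, Subgroup.mem_centralizer_singleton_iff.mpr (by decide)⟩

def orientedCornerGroup : Subgroup (twistCentralizer (Fin 8) 3) :=
  Subgroup.closure {moveU, moveL, moveF, moveR, moveB, moveD}

lemma map_subtype_orientedCornerGroup :
    orientedCornerGroup.map (twistCentralizer (Fin 8) 3).subtype =
      cornerGroup.map (relabelCorners : _ →* Perm (Fin 8 × ZMod 3)) := by
  simp only [orientedCornerGroup, cornerGroup, MonoidHom.map_closure, Set.image_insert_eq,
    Set.image_singleton]
  rfl

lemma card_cornerGroup_eq_card_orientedCornerGroup :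
    Nat.card cornerGroup = Nat.card orientedCornerGroup := by
  rw [Nat.card_congr (relabelCorners.subgroupMap cornerGroup).toEquiv,
    ← map_subtype_orientedCornerGroup]
  exact Nat.card_congr (Subgroup.equivMapOfInjective _ _ Subtype.val_injective).toEquiv.symm

lemma orientedCornerGroup_le_ker_totalTwist : orientedCornerGroup ≤ totalTwist.ker := by
  rw [orientedCornerGroup, Subgroup.closure_le]
  simp only [Set.insert_subset_iff, Set.singleton_subset_iff, SetLike.mem_coe, MonoidHom.mem_ker]
  decide

lemma moves_mem_orientedCornerGroup :
    moveU ∈ orientedCornerGroup ∧ moveL ∈ orientedCornerGroup ∧ moveF ∈ orientedCornerGroup ∧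
      moveR ∈ orientedCornerGroup ∧ moveB ∈ orientedCornerGroup ∧ moveD ∈ orientedCornerGroup := by
  have hgen : {moveU, moveL, moveF, moveR, moveB, moveD} ⊆ (orientedCornerGroup : Set _) :=
    Subgroup.subset_closure
  simpa only [Set.insert_subset_iff, Set.singleton_subset_iff, SetLike.mem_coe] using hgen

lemma map_cubiePerm_orientedCornerGroup : orientedCornerGroup.map cubiePerm = ⊤ := by
  obtain ⟨hU, hL, -, hR, hB, hD⟩ := moves_mem_orientedCornerGroup
  rw [eq_top_iff, ← Perm.closure_cycle_adjacent_swap (isCycle_finRotate (n := 6))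
    support_finRotate 0, Subgroup.closure_le]
  rintro _ (rfl | rfl)
  · refine ⟨moveB * moveR * moveD⁻¹ * moveR * moveU * moveL * moveU, ?_, by decide⟩
    exact mul_mem (mul_mem (mul_mem (mul_mem (mul_mem (mul_mem hB hR) (inv_mem hD)) hR) hU) hL) hU
  · refine ⟨moveB * moveR * moveD * moveL * moveU, ?_, by decide⟩
    exact mul_mem (mul_mem (mul_mem (mul_mem hB hR) hD) hL) hU

set_option maxHeartbeats 1000000 in
lemma twistHom_mem_orientedCornerGroup :
    twistHom (.ofAdd (Pi.single 1 1 - Pi.single 7 1)) ∈ orientedCornerGroup := by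
  obtain ⟨hU, hL, hF, -⟩ := moves_mem_orientedCornerGroup
  have h : twistHom (.ofAdd (Pi.single 1 1 - Pi.single 7 1)) =
      (moveU * moveL) ^ 10 * (moveL * moveF) ^ 5 := Subtype.ext (by decide)
  rw [h]
  exact mul_mem (pow_mem (mul_mem hU hL) _) (pow_mem (mul_mem hL hF) _)

/-- The corner group `R_c` has order `88179840 = 8! · 3^7`. -/
theorem card_cornerGroup :
    Nat.card cornerGroup = 88179840 ∧ 88179840 = Nat.factorial 8 * 3 ^ 7 := by
  refine ⟨?_, rfl⟩
  rw [card_cornerGroup_eq_card_orientedCornerGroup,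
    card_eq_of_le_ker_totalTwist orientedCornerGroup_le_ker_totalTwist
      map_cubiePerm_orientedCornerGroup (by decide : (1 : Fin 8) ≠ 7)
      twistHom_mem_orientedCornerGroup]
  rfl
end

section
/- The edge group R_e has order 980995276800 = 12! · 2^11. -/
/-!
Labelling every edge facelet by its edge cubie and an orientation bit identifies the
cubie-respecting permutations of the 24 edge facelets with the wreath product `ZMod 2 ≀ S₁₂`
acting on `Fin 12 × ZMod 2`. Every face move lies in the subgroup of elements whose flip vector
sums to zero, which has order `12! · 2¹¹`. Conversely, explicit move sequences realise a 12-cycle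
and an adjacent transposition of the cubies, so the edge group maps onto `S₁₂`, and one sequence
flips exactly two edges in place; its conjugates then produce every flip vector of even weight,
so the edge group is the whole zero-sum subgroup.
-/

open Equiv

set_option maxRecDepth 100000 in
def uEdge : Perm {x : Fin 48 // (x : ℕ) < 24} := Umove.subtypePerm (by decide)
set_option maxRecDepth 100000 in
def lEdge : Perm {x : Fin 48 // (x : ℕ) < 24} := Lmove.subtypePerm (by decide)
set_option maxRecDepth 100000 in
def fEdge : Perm {x : Fin 48 // (x : ℕ) < 24} := Fmove.subtypePerm (by decide)
set_option maxRecDepth 100000 in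
def rEdge : Perm {x : Fin 48 // (x : ℕ) < 24} := Rmove.subtypePerm (by decide)
set_option maxRecDepth 100000 in
def bEdge : Perm {x : Fin 48 // (x : ℕ) < 24} := Bmove.subtypePerm (by decide)
set_option maxRecDepth 100000 in
def dEdge : Perm {x : Fin 48 // (x : ℕ) < 24} := Dmove.subtypePerm (by decide)

/-- The edge group `R_e`, generated by the restrictions of the six face moves
to the edge facelets. -/
def edgeGroup : Subgroup (Perm {x : Fin 48 // (x : ℕ) < 24}) :=
  Subgroup.closure {uEdge, lEdge, fEdge, rEdge, bEdge, dEdge}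

open Finset

section Wreath

variable {ι A : Type*}

/-- The element `(v, σ)` of the wreath product `A ≀ Perm ι`, in its action on `ι × A`. -/
def wreathPerm [AddGroup A] (σ : Perm ι) (v : ι → A) : Perm (ι × A) :=
  prodShear σ fun i => Equiv.addRight (v i)

section AddGroup

variable [AddGroup A]

@[simp]
theorem wreathPerm_apply (σ : Perm ι) (v : ι → A) (x : ι × A) :
    wreathPerm σ v x = (σ x.1, x.2 + v x.1) :=
  rfl

theorem wreathPerm_mul (σ τ : Perm ι) (v w : ι → A) :
    wreathPerm σ v * wreathPerm τ w = wreathPerm (σ * τ) (w + v ∘ τ) := by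
  ext x <;> simp [add_assoc]

theorem wreathPerm_one_zero : wreathPerm (1 : Perm ι) (0 : ι → A) = 1 := by
  ext x <;> simp

theorem wreathPerm_inv (σ : Perm ι) (v : ι → A) :
    (wreathPerm σ v)⁻¹ = wreathPerm σ⁻¹ (-v ∘ ⇑σ⁻¹) := by
  rw [inv_eq_iff_mul_eq_one, wreathPerm_mul]
  ext x <;> simp

theorem wreathPerm_inj {σ τ : Perm ι} {v w : ι → A} :
    wreathPerm σ v = wreathPerm τ w ↔ σ = τ ∧ v = w := by
  refine ⟨fun h => ?_, by rintro ⟨rfl, rfl⟩; rfl⟩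
  have h0 (i : ι) : σ i = τ i ∧ v i = w i := by simpa using congr($h (i, 0))
  exact ⟨Equiv.ext fun i => (h0 i).1, funext fun i => (h0 i).2⟩

def topPerms (H : Subgroup (Perm (ι × A))) : Subgroup (Perm ι) where
  carrier := {σ | ∃ v, wreathPerm σ v ∈ H}
  one_mem' := ⟨0, by rw [wreathPerm_one_zero]; exact H.one_mem⟩
  mul_mem' := by
    rintro σ τ ⟨v, hv⟩ ⟨w, hw⟩
    exact ⟨_, wreathPerm_mul σ τ v w ▸ H.mul_mem hv hw⟩
  inv_mem' := by
    rintro σ ⟨v, hv⟩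
    exact ⟨_, wreathPerm_inv σ v ▸ H.inv_mem hv⟩

end AddGroup

section AddCommGroup

variable [AddCommGroup A]

theorem wreathPerm_conj_one (σ : Perm ι) (u w : ι → A) :
    wreathPerm σ u * wreathPerm 1 w * (wreathPerm σ u)⁻¹ = wreathPerm 1 (w ∘ ⇑σ⁻¹) := by
  rw [wreathPerm_inv, wreathPerm_mul, wreathPerm_mul]
  ext x <;> simp [add_comm]

def baseVectors (H : Subgroup (Perm (ι × A))) : AddSubgroup (ι → A) where
  carrier := {v | wreathPerm 1 v ∈ H}
  zero_mem' := by
    show wreathPerm 1 0 ∈ H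
    rw [wreathPerm_one_zero]
    exact H.one_mem
  add_mem' := by
    intro v w hv hw
    have := H.mul_mem hw hv
    rwa [wreathPerm_mul, one_mul, Perm.coe_one, Function.comp_id] at this
  neg_mem' := by
    intro v hv
    have := H.inv_mem hv
    rwa [wreathPerm_inv, inv_one, Perm.coe_one, Function.comp_id] at this

variable (ι A) [Fintype ι]

def zeroSumWreath : Subgroup (Perm (ι × A)) where
  carrier := {g | ∃ σ v, ∑ i, v i = 0 ∧ wreathPerm σ v = g}
  one_mem' := ⟨1, 0, by simp, wreathPerm_one_zero⟩
  mul_mem' := by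
    rintro _ _ ⟨σ, v, hv, rfl⟩ ⟨τ, w, hw, rfl⟩
    refine ⟨σ * τ, w + v ∘ τ, ?_, (wreathPerm_mul σ τ v w).symm⟩
    simp [sum_add_distrib, Equiv.sum_comp τ v, hv, hw]
  inv_mem' := by
    rintro _ ⟨σ, v, hv, rfl⟩
    refine ⟨σ⁻¹, -v ∘ ⇑σ⁻¹, ?_, (wreathPerm_inv σ v).symm⟩
    simp [Equiv.sum_comp σ.symm v, hv]

variable {ι A}

theorem mem_zeroSumWreath_of_apply {g : Perm (ι × A)}
    (hg : ∀ i a, g (i, a) = ((g (i, 0)).1, a + (g (i, 0)).2)) (hsum : ∑ i, (g (i, 0)).2 = 0) :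
    g ∈ zeroSumWreath ι A := by
  set σ : ι → ι := fun i => (g (i, 0)).1
  set v : ι → A := fun i => (g (i, 0)).2
  have hσ : Function.Injective σ := fun i j hij => by
    have : g (i, 0) = g (j, v i - v j) := by rw [hg j]; ext <;> simp [σ, v, hij]
    exact congrArg Prod.fst (g.injective this)
  refine ⟨Equiv.ofBijective σ (Finite.injective_iff_bijective.mp hσ), v, hsum, ?_⟩
  ext ⟨i, a⟩ <;> simp [hg i a, σ, v]

theorem mem_topPerms_of_apply {H : Subgroup (Perm (ι × A))} (hH : H ≤ zeroSumWreath ι A)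
    {g : Perm (ι × A)} (hg : g ∈ H) {σ : Perm ι} (hσ : ∀ i, (g (i, 0)).1 = σ i) :
    σ ∈ topPerms H := by
  obtain ⟨τ, v, -, rfl⟩ := hH hg
  obtain rfl : τ = σ := Equiv.ext fun i => by simpa using hσ i
  exact ⟨v, hg⟩

theorem card_zeroSumWreath [Nonempty ι] [Finite A] :
    Nat.card (zeroSumWreath ι A) =
      (Fintype.card ι).factorial * Nat.card A ^ (Fintype.card ι - 1) := by
  classical
  let coordSum : (ι → A) →+ A := AddMonoidHom.mk' (fun v => ∑ i, v i) fun _ _ => sum_add_distrib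
  have hsurj : Function.Surjective coordSum := fun a =>
    ⟨Pi.single (Classical.arbitrary ι) a, by simp [coordSum]⟩
  have hker : Nat.card coordSum.ker * Nat.card A = Nat.card A ^ Fintype.card ι := by
    simpa [AddSubgroup.index_ker, AddMonoidHom.range_eq_top.mpr hsurj, Nat.card_fun]
      using coordSum.ker.card_mul_index
  let e : Perm ι × coordSum.ker ≃ zeroSumWreath ι A :=
    Equiv.ofBijective (fun p => ⟨wreathPerm p.1 p.2, p.1, p.2, p.2.2, rfl⟩)
      ⟨fun p q h => by
          obtain ⟨hσ, hv⟩ := wreathPerm_inj.mp (congrArg Subtype.val h)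
          exact Prod.ext hσ (Subtype.ext hv),
        by rintro ⟨_, σ, v, hv, rfl⟩; exact ⟨(σ, ⟨v, hv⟩), rfl⟩⟩
  rw [← Nat.card_congr e, Nat.card_prod, Nat.card_perm, Nat.card_eq_fintype_card]
  congr 1
  refine Nat.eq_of_mul_eq_mul_right (Nat.card_pos (α := A)) ?_
  rw [hker, pow_sub_one_mul Fintype.card_ne_zero]

end AddCommGroup

variable [Fintype ι] [DecidableEq ι]

theorem wreathPerm_one_mem_of_sum_eq_zero {H : Subgroup (Perm (ι × ZMod 2))}
    (htop : topPerms H = ⊤) {a b : ι} (hab : a ≠ b)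
    (hflip : wreathPerm 1 (Pi.single a 1 + Pi.single b 1) ∈ H) {v : ι → ZMod 2}
    (hv : ∑ i, v i = 0) : wreathPerm 1 v ∈ H := by
  have hpair (i : ι) : Pi.single a 1 + Pi.single i 1 ∈ baseVectors H := by
    obtain rfl | hia := eq_or_ne i a
    · rw [← Pi.single_add, CharTwo.add_self_eq_zero, Pi.single_zero]
      exact zero_mem _
    -- conjugating by a lift of `swap b i` moves the double flip from `{a, b}` to `{a, i}`
    obtain ⟨u, hu⟩ : swap b i ∈ topPerms H := htop ▸ Subgroup.mem_top _
    have hconj := H.mul_mem (H.mul_mem hu hflip) (H.inv_mem hu)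
    rw [wreathPerm_conj_one] at hconj
    show wreathPerm 1 _ ∈ H
    convert hconj using 2
    ext j
    simp [Pi.single_apply, swap_apply_eq_iff, swap_apply_of_ne_of_ne hab hia.symm]
  have hdecomp : v = ∑ i, v i • (Pi.single a 1 + Pi.single i 1) := by
    ext j
    simp [smul_add, sum_add_distrib, hv, Pi.single_apply]
  rw [hdecomp]
  exact (AddSubgroup.toZModSubmodule 2 (baseVectors H)).sum_mem fun i _ =>
    Submodule.smul_mem _ _ (hpair i)

theorem eq_zeroSumWreath_of_topPerms_eq_top {H : Subgroup (Perm (ι × ZMod 2))}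
    (hH : H ≤ zeroSumWreath ι (ZMod 2)) (htop : topPerms H = ⊤) {a b : ι} (hab : a ≠ b)
    (hflip : wreathPerm 1 (Pi.single a 1 + Pi.single b 1) ∈ H) :
    H = zeroSumWreath ι (ZMod 2) := by
  refine le_antisymm hH ?_
  rintro _ ⟨σ, v, hv, rfl⟩
  obtain ⟨u, hσu⟩ : σ ∈ topPerms H := htop ▸ Subgroup.mem_top σ
  obtain ⟨τ, u', hu, heq⟩ := hH hσu
  obtain ⟨rfl, rfl⟩ := wreathPerm_inj.mp heq.symm
  have hsplit : wreathPerm σ v = wreathPerm σ u * wreathPerm 1 (v - u) := by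
    rw [wreathPerm_mul]; simp
  rw [hsplit]
  exact H.mul_mem hσu <| wreathPerm_one_mem_of_sum_eq_zero htop hab hflip <| by
    simp [sum_sub_distrib, hv, hu]

end Wreath

abbrev EdgeFacelet := {x : Fin 48 // (x : ℕ) < 24}

/-- Row `e` lists the two facelets of edge cubie `e`. Which of them gets orientation `0` is
arbitrary: relabelling changes the flip vector of a move but not the parity of its sum. -/
def edgeFaceletOf (p : Fin 12 × ZMod 2) : EdgeFacelet :=
  let k : Fin 24 := (![![0, 10], ![1, 16], ![2, 18], ![3, 21], ![4, 12], ![5, 7], ![6, 23],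
    ![8, 17], ![9, 20], ![11, 14], ![13, 19], ![15, 22]] : Fin 12 → Fin 2 → Fin 24) p.1 p.2
  ⟨Fin.castLE (by norm_num) k, k.isLt⟩

theorem edgeFaceletOf_bijective : Function.Bijective edgeFaceletOf := by
  decide

def edgeLabel : Fin 12 × ZMod 2 ≃ EdgeFacelet where
  toFun := edgeFaceletOf
  invFun := Fintype.bijInv edgeFaceletOf_bijective
  left_inv := Fintype.leftInverse_bijInv _
  right_inv := Fintype.rightInverse_bijInv _

def signedEdgeGroup : Subgroup (Perm (Fin 12 × ZMod 2)) :=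
  edgeGroup.map edgeLabel.symm.permCongrHom.toMonoidHom

theorem permCongr_mem_signedEdgeGroup {g : Perm EdgeFacelet} (hg : g ∈ edgeGroup) :
    edgeLabel.symm.permCongr g ∈ signedEdgeGroup :=
  Subgroup.mem_map_of_mem _ hg

theorem card_signedEdgeGroup : Nat.card signedEdgeGroup = Nat.card edgeGroup :=
  Subgroup.card_map_of_injective (MulEquiv.injective _)

set_option maxRecDepth 10000 in
theorem signedEdgeGroup_le_zeroSumWreath :
    signedEdgeGroup ≤ zeroSumWreath (Fin 12) (ZMod 2) := by
  rw [signedEdgeGroup, Subgroup.map_le_iff_le_comap, edgeGroup, Subgroup.closure_le]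
  rintro g (rfl | rfl | rfl | rfl | rfl | rfl) <;>
    exact mem_zeroSumWreath_of_apply (by decide +kernel) (by decide +kernel)

theorem list_prod_mem_edgeGroup {l : List (Perm EdgeFacelet)}
    (hl : ∀ g ∈ l, g ∈ ({uEdge, lEdge, fEdge, rEdge, bEdge, dEdge} : Set _)) :
    l.prod ∈ edgeGroup :=
  Subgroup.list_prod_mem _ fun g hg => Subgroup.subset_closure (hl g hg)

set_option maxRecDepth 10000 in
theorem topPerms_signedEdgeGroup : topPerms signedEdgeGroup = ⊤ := by
  let c : Perm (Fin 12) := List.formPerm [0, 10, 5, 9, 1, 8, 4, 11, 3, 7, 2, 6]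
  have hc : c.IsCycle := List.isCycle_formPerm (by decide) (by decide)
  have hsupp : c.support = univ := by decide +kernel
  rw [eq_top_iff, ← Perm.closure_cycle_adjacent_swap hc hsupp 0, Subgroup.closure_le]
  rintro σ (rfl | rfl)
  · exact mem_topPerms_of_apply signedEdgeGroup_le_zeroSumWreath
      (permCongr_mem_signedEdgeGroup (list_prod_mem_edgeGroup (l := [dEdge, lEdge, lEdge, fEdge,
        rEdge, bEdge, fEdge, lEdge, fEdge, rEdge, uEdge, dEdge, rEdge, bEdge, bEdge]) (by simp)))
      (by decide +kernel)
  · -- this word moves the cubies by a transposition times a 7-cycle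
    exact mem_topPerms_of_apply signedEdgeGroup_le_zeroSumWreath
      (permCongr_mem_signedEdgeGroup (pow_mem (list_prod_mem_edgeGroup (l := [bEdge, dEdge, lEdge,
        uEdge, bEdge, bEdge, dEdge, lEdge, fEdge]) (by simp)) 7))
      (by decide +kernel)

set_option maxRecDepth 10000 in
theorem pairFlip_mem_signedEdgeGroup :
    wreathPerm 1 (Pi.single 6 1 + Pi.single 10 1) ∈ signedEdgeGroup := by
  -- `w` fixes cubies 6, 7, 10 and cycles the other nine, so `w ^ 9` only reorients edges
  let w : List (Perm EdgeFacelet) :=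
    [fEdge, rEdge, dEdge, fEdge, lEdge, bEdge, fEdge, uEdge, lEdge, uEdge, rEdge, bEdge]
  have hflip : edgeLabel.symm.permCongr (w.prod ^ 9) =
      wreathPerm 1 (Pi.single 6 1 + Pi.single 10 1) := by
    decide +kernel
  rw [← hflip]
  exact permCongr_mem_signedEdgeGroup (pow_mem (list_prod_mem_edgeGroup (by simp [w])) 9)

/-- The edge group `R_e` has order `980995276800 = 12! · 2^11`. -/
theorem card_edgeGroup :
    Nat.card edgeGroup = 980995276800 ∧ 980995276800 = Nat.factorial 12 * 2 ^ 11 := by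
  have hsigned : signedEdgeGroup = zeroSumWreath (Fin 12) (ZMod 2) :=
    eq_zeroSumWreath_of_topPerms_eq_top signedEdgeGroup_le_zeroSumWreath topPerms_signedEdgeGroup
      (by decide : (6 : Fin 12) ≠ 10) pairFlip_mem_signedEdgeGroup
  have hcard : Nat.card edgeGroup = Nat.factorial 12 * 2 ^ 11 := by
    rw [← card_signedEdgeGroup, hsigned, card_zeroSumWreath, Fintype.card_fin, Nat.card_zmod]
  rw [hcard]
  norm_num [Nat.factorial]
end
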